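/- Let H be a Hopf algebra over a field k with bijective antipode S and χ : H⊗H → k a unital 2-cocycle. Define U : H → k by U(h) = χ(h₁ ⊗ S h₂) and suppose V : H → k is a convolution inverse of U, i.e. U(h₁)V(h₂) = ε(h) = V(h₁)U(h₂) for all h ∈ H. Then for all a, h ∈ H: χ(a·h₁ ⊗ S h₂)·V(h₃) = χ⁻¹(a ⊗ h). -/

import Mathlib

open scoped TensorProduct
open TensorProduct LinearMap

namespace PaperTwist

variable (k H : Type) [Field k] [Ring H] [HopfAlgebra k H]

/-- The comultiplication of `H`. -/
noncomputable def Δ : H →ₗ[k] H ⊗[k] H := Coalgebra.comul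

/-- The twofold iterated comultiplication `h ↦ h₁ ⊗ (h₂ ⊗ h₃)`. -/
noncomputable def Δ₂ : H →ₗ[k] H ⊗[k] (H ⊗[k] H) := (LinearMap.lTensor H (Δ k H)) ∘ₗ (Δ k H)

/-- The counit of `H`. -/
noncomputable def ε : H →ₗ[k] k := Coalgebra.counit

/-- The antipode of `H`. -/
noncomputable def S : H →ₗ[k] H := HopfAlgebra.antipode k

/-- `χ : H ⊗ H → k` is a unital 2-cocycle with convolution inverse `χ'`:
`χ(h₁⊗g₁)χ⁻¹(h₂⊗g₂) = ε(h)ε(g) = χ⁻¹(h₁⊗g₁)χ(h₂⊗g₂)`,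
`χ(g₁⊗f₁)χ(h⊗g₂f₂) = χ(h₁⊗g₁)χ(h₂g₂⊗f)` and `χ(1⊗h) = ε(h) = χ(h⊗1)`,
all Sweedler sums being expressed via arbitrary finite representations of coproducts. -/
def IsFunCocycle (χ χ' : H ⊗[k] H →ₗ[k] k) : Prop :=
  (∀ (h g : H) (ι κ : Type) (s : Finset ι) (t : Finset κ) (h1 h2 : ι → H) (g1 g2 : κ → H),
    Δ k H h = ∑ i ∈ s, h1 i ⊗ₜ[k] h2 i → Δ k H g = ∑ j ∈ t, g1 j ⊗ₜ[k] g2 j →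
    ((∑ i ∈ s, ∑ j ∈ t, χ (h1 i ⊗ₜ[k] g1 j) * χ' (h2 i ⊗ₜ[k] g2 j) = ε k H h * ε k H g) ∧
     (∑ i ∈ s, ∑ j ∈ t, χ' (h1 i ⊗ₜ[k] g1 j) * χ (h2 i ⊗ₜ[k] g2 j) = ε k H h * ε k H g))) ∧
  (∀ (h g f : H) (ι κ μ : Type) (s : Finset ι) (t : Finset κ) (u : Finset μ)
      (h1 h2 : ι → H) (g1 g2 : κ → H) (f1 f2 : μ → H),
    Δ k H h = ∑ i ∈ s, h1 i ⊗ₜ[k] h2 i → Δ k H g = ∑ j ∈ t, g1 j ⊗ₜ[k] g2 j →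
    Δ k H f = ∑ l ∈ u, f1 l ⊗ₜ[k] f2 l →
    ∑ j ∈ t, ∑ l ∈ u, χ (g1 j ⊗ₜ[k] f1 l) * χ (h ⊗ₜ[k] (g2 j * f2 l))
      = ∑ i ∈ s, ∑ j ∈ t, χ (h1 i ⊗ₜ[k] g1 j) * χ ((h2 i * g2 j) ⊗ₜ[k] f)) ∧
  (∀ h : H, χ ((1 : H) ⊗ₜ[k] h) = ε k H h ∧ χ (h ⊗ₜ[k] (1 : H)) = ε k H h)

end PaperTwist

open PaperTwist

/-!
Put `U(h) = χ(h₁ ⊗ S h₂)`, `W(a ⊗ h) = χ(a h₁ ⊗ S h₂)` and `π(a ⊗ h) = ε(a) h`, and work in the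
convolution algebra of `H ⊗ H`. The cocycle identity for the triple `(a, h₁, S h₂)`, together with
`Δ(S y) = S y₂ ⊗ S y₁`, gives `χ * W = U ∘ π`. As `π` is a coalgebra map,
`(U ∘ π) * (V ∘ π) = (U * V) ∘ π = 1`, so `W * (V ∘ π)` is a right inverse of `χ` and therefore
equals its left inverse `χ⁻¹`; evaluated at `a ⊗ h` it is `χ(a h₁ ⊗ S h₂) V(h₃)`.

Sweedler regroupings involving the antipode, such as `Δ(S y) = S y₂ ⊗ S y₁`, are proved in the
convolution algebras `Hom(H, H ⊗ H)` and `Hom(H, H ⊗ H ⊗ H)`: placing the legs of a coproduct in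
different tensor factors turns coassociativity into associativity of the convolution product.
-/

open Coalgebra HopfAlgebra WithConv
open Algebra.TensorProduct (includeLeft includeRight)

namespace HopfAlgebra

variable {R A : Type*} [CommSemiring R] [Semiring A] [HopfAlgebra R A]

lemma toConv_algHom_comp_antipode_mul {B : Type*} [Semiring B] [Algebra R B] (f : A →ₐ[R] B) :
    toConv (f.toLinearMap ∘ₗ antipode R) * toConv f.toLinearMap = 1 := by
  have := LinearMap.algHom_comp_convMul_distrib f (toConv (antipode R)) (toConv LinearMap.id)
  rw [LinearMap.antipode_mul_id] at this
  refine WithConv.ext (LinearMap.ext fun c => ?_)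
  simpa using (LinearMap.congr_fun this c).symm

lemma toConv_algHom_mul_comp_antipode {B : Type*} [Semiring B] [Algebra R B] (f : A →ₐ[R] B) :
    toConv f.toLinearMap * toConv (f.toLinearMap ∘ₗ antipode R) = 1 := by
  have := LinearMap.algHom_comp_convMul_distrib f (toConv LinearMap.id) (toConv (antipode R))
  rw [LinearMap.id_mul_antipode] at this
  refine WithConv.ext (LinearMap.ext fun c => ?_)
  simpa using (LinearMap.congr_fun this c).symm

lemma toConv_includeLeft_mul_includeRight :
    toConv (includeLeft : A →ₐ[R] A ⊗[R] A).toLinearMap * toConv includeRight.toLinearMap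
      = toConv comul := by
  ext c
  simp [(ℛ R c).convMul_apply, ← (ℛ R c).eq]

lemma toConv_includeRight_antipode_mul_includeLeft_antipode :
    toConv ((includeRight : A →ₐ[R] A ⊗[R] A).toLinearMap ∘ₗ antipode R) *
        toConv (includeLeft.toLinearMap ∘ₗ antipode R)
      = toConv (map (antipode R) (antipode R) ∘ₗ (TensorProduct.comm R A A).toLinearMap ∘ₗ
          comul) := by
  ext c
  simp [(ℛ R c).convMul_apply, ← (ℛ R c).eq]

lemma map_antipode_comp_comm_comp_comul :
    map (antipode R) (antipode R) ∘ₗ (TensorProduct.comm R A A).toLinearMap ∘ₗ comul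
      = comul ∘ₗ antipode R := by
  apply toConv_injective
  refine left_inv_eq_right_inv ?_ LinearMap.comul_right_inv
  rw [← toConv_includeRight_antipode_mul_includeLeft_antipode,
    ← toConv_includeLeft_mul_includeRight, mul_assoc,
    ← mul_assoc (toConv (includeLeft.toLinearMap ∘ₗ antipode R)),
    toConv_algHom_comp_antipode_mul, one_mul, toConv_algHom_comp_antipode_mul]

lemma toConv_includeRight_comp_comul_comp_antipode :
    toConv ((includeRight : A ⊗[R] A →ₐ[R] A ⊗[R] (A ⊗[R] A)).toLinearMap ∘ₗ comul ∘ₗ antipode R)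
      = toConv ((includeRight.comp includeRight : A →ₐ[R] A ⊗[R] (A ⊗[R] A)).toLinearMap
            ∘ₗ antipode R) *
          toConv ((includeRight.comp includeLeft).toLinearMap ∘ₗ antipode R) := by
  rw [← map_antipode_comp_comm_comp_comul]
  ext c
  simp [(ℛ R c).convMul_apply, ← (ℛ R c).eq, tmul_sum]

/-- In Sweedler notation: `h₁ ⊗ (S h₃)₁ ⊗ h₂ (S h₃)₂ = h₁ ⊗ S h₂ ⊗ 1`. -/
lemma toConv_includeLeft_mul_mul_includeRight_comul_antipode :
    toConv (includeLeft : A →ₐ[R] A ⊗[R] (A ⊗[R] A)).toLinearMap *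
        toConv (includeRight.comp includeRight : A →ₐ[R] A ⊗[R] (A ⊗[R] A)).toLinearMap *
        toConv ((includeRight : A ⊗[R] A →ₐ[R] A ⊗[R] (A ⊗[R] A)).toLinearMap ∘ₗ comul
          ∘ₗ antipode R)
      = toConv includeLeft.toLinearMap *
          toConv ((includeRight.comp includeLeft : A →ₐ[R] A ⊗[R] (A ⊗[R] A)).toLinearMap
            ∘ₗ antipode R) := by
  rw [toConv_includeRight_comp_comul_comp_antipode, mul_assoc,
    ← mul_assoc (toConv (includeRight.comp includeRight).toLinearMap),
    toConv_algHom_mul_comp_antipode, one_mul]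

end HopfAlgebra

namespace Coalgebra

variable {R C : Type*} [CommSemiring R] [AddCommMonoid C] [Module R C] [Coalgebra R C]

lemma sum_counit_right_smul {c : C} {ι : Type*} (𝓡 : Repr R c ι) :
    ∑ i ∈ 𝓡.index, counit (R := R) (𝓡.right i) • 𝓡.left i = c := by
  simpa only [map_sum, _root_.TensorProduct.rid_tmul, one_smul] using
    congr(_root_.TensorProduct.rid R C $(sum_tmul_counit_eq 𝓡))

variable (R C) in
noncomputable def counitTensorId : C ⊗[R] C →ₗc[R] C :=
  (Coalgebra.TensorProduct.lid R C).toCoalgHom.comp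
    (Coalgebra.TensorProduct.map (counitCoalgHom R C) (CoalgHom.id R C))

@[simp] lemma counitTensorId_tmul (a c : C) :
    counitTensorId R C (a ⊗ₜ c) = counit (R := R) a • c := by
  simp [counitTensorId]

lemma toConv_comp_counitTensorId_mul_eq_one {U V : C →ₗ[R] R}
    (hUV : toConv U * toConv V = 1) :
    toConv (U ∘ₗ (counitTensorId R C : C ⊗[R] C →ₗ[R] C)) *
      toConv (V ∘ₗ (counitTensorId R C : C ⊗[R] C →ₗ[R] C)) = 1 := by
  have := convMul_comp_coalgHom_distrib (toConv U) (toConv V) (counitTensorId R C)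
  rw [hUV] at this
  refine WithConv.ext (this.symm.trans ?_)
  ext a c
  simp [mul_comm]

lemma convMul_comp_counitTensorId_tmul {B : Type*} [Semiring B] [Bialgebra R B]
    (F : B ⊗[R] B →ₗ[R] R) (G : B →ₗ[R] R) (a c : B) {ι : Type*} (r : Repr R c ι) :
    (toConv F * toConv (G ∘ₗ (counitTensorId R B : B ⊗[R] B →ₗ[R] B))) (a ⊗ₜ c)
      = ∑ i ∈ r.index, F (a ⊗ₜ r.left i) * G (r.right i) := by
  rw [((ℛ R a).tmul r).convMul_apply]
  conv_rhs => rw [← sum_counit_right_smul (ℛ R a)]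
  simp only [Repr.tmul_index, Repr.tmul_left, Repr.tmul_right, coe_comp, coe_coe,
    Function.comp_apply, counitTensorId_tmul, map_smul, smul_eq_mul, Finset.sum_product, sum_tmul,
    ← smul_tmul', map_sum, Finset.sum_mul, mul_assoc]
  rw [Finset.sum_comm]
  exact Finset.sum_congr rfl fun _ _ => Finset.sum_congr rfl fun _ _ => by ring

end Coalgebra

namespace PaperTwist

variable {k H : Type} [Field k] [Ring H] [HopfAlgebra k H]

noncomputable def antipodeForm (χ : H ⊗[k] H →ₗ[k] k) : H →ₗ[k] k :=
  χ ∘ₗ (S k H).lTensor H ∘ₗ Δ k H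

noncomputable def mulAntipodeForm (χ : H ⊗[k] H →ₗ[k] k) : H ⊗[k] H →ₗ[k] k :=
  χ ∘ₗ map (mul' k H) (S k H) ∘ₗ (TensorProduct.assoc k H H H).symm.toLinearMap ∘ₗ
    (Δ k H).lTensor H

lemma antipodeForm_apply (χ : H ⊗[k] H →ₗ[k] k) (h : H) {ι : Type*} (r : Repr k h ι) :
    antipodeForm χ h = ∑ i ∈ r.index, χ (r.left i ⊗ₜ S k H (r.right i)) := by
  simp [antipodeForm, Δ, ← r.eq]

lemma mulAntipodeForm_tmul (χ : H ⊗[k] H →ₗ[k] k) (a h : H) {ι : Type*} (r : Repr k h ι) :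
    mulAntipodeForm χ (a ⊗ₜ h) = ∑ i ∈ r.index, χ ((a * r.left i) ⊗ₜ S k H (r.right i)) := by
  simp [mulAntipodeForm, Δ, ← r.eq, tmul_sum]

lemma sum_mul_mulAntipodeForm_eq_sum_sum (χ : H ⊗[k] H →ₗ[k] k) (b c h : H) {ι : Type*}
    {κ : ι → Type*} (r : Repr k h ι) (r₁ : ∀ i, Repr k (r.left i) (κ i)) :
    ∑ i ∈ r.index, χ (b ⊗ₜ r.left i) * mulAntipodeForm χ (c ⊗ₜ r.right i)
      = ∑ i ∈ r.index, ∑ j ∈ (r₁ i).index,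
          χ (b ⊗ₜ (r₁ i).left j) * χ ((c * (r₁ i).right j) ⊗ₜ S k H (r.right i)) := by
  have := congrArg (mul' k k ∘ₗ map (χ ∘ₗ mk k H H b) (χ ∘ₗ map (mulLeft k c) (S k H)))
    (sum_tmul_tmul_eq r r₁ fun i => ℛ k (r.right i))
  simp only [map_sum, LinearMap.comp_apply, TensorProduct.map_tmul, mk_apply, mulLeft_apply,
    mul'_apply] at this
  simp only [mulAntipodeForm_tmul χ _ _ (ℛ k (r.right _)), Finset.mul_sum, this]

lemma sum_mul_comul_antipode_eq_mul_antipodeForm (χ : H ⊗[k] H →ₗ[k] k) (a h : H) :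
    ∑ i ∈ (ℛ k h).index, ∑ j ∈ (ℛ k ((ℛ k h).left i)).index,
      ∑ l ∈ (ℛ k (S k H ((ℛ k h).right i))).index,
        χ ((ℛ k ((ℛ k h).left i)).left j ⊗ₜ (ℛ k (S k H ((ℛ k h).right i))).left l) *
          χ (a ⊗ₜ ((ℛ k ((ℛ k h).left i)).right j * (ℛ k (S k H ((ℛ k h).right i))).right l))
      = χ (a ⊗ₜ 1) * antipodeForm χ h := by
  have := congrArg
    (fun F : WithConv (H →ₗ[k] H ⊗[k] (H ⊗[k] H)) => (mul' k k ∘ₗ map χ (χ ∘ₗ mk k H H a) ∘ₗ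
      (TensorProduct.assoc k H H H).symm.toLinearMap) (ofConv F h))
    (toConv_includeLeft_mul_mul_includeRight_comul_antipode (R := k) (A := H))
  simp only [(ℛ k h).convMul_apply, (ℛ k ((ℛ k h).left _)).convMul_apply,
    LinearMap.comp_apply, ← (ℛ k (antipode k _)).eq] at this
  simp only [Algebra.TensorProduct.toLinearMap_includeLeft, flip_apply,
    AlgebraTensorModule.mk_apply, coe_mk, AddHom.coe_mk, AlgHom.comp_toLinearMap,
    Algebra.TensorProduct.toLinearMap_includeRight, coe_comp, Function.comp_apply,
    Algebra.TensorProduct.tmul_mul_tmul, mul_one, one_mul, map_sum, Finset.mul_sum, Finset.sum_mul,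
    LinearEquiv.coe_coe, TensorProduct.assoc_symm_tmul, TensorProduct.map_tmul, mk_apply,
    mul'_apply] at this
  rw [antipodeForm_apply χ h (ℛ k h), Finset.mul_sum]
  simp only [S, mul_comm (χ (a ⊗ₜ 1))]
  rw [← this]
  exact Finset.sum_congr rfl fun i _ => Finset.sum_comm

lemma sum_mulAntipodeForm_mul_eq (χ : H ⊗[k] H →ₗ[k] k) (V : H →ₗ[k] k) (a h : H) {ι : Type}
    (s : Finset ι) (p1 p2 p3 : ι → H) (hp : Δ₂ k H h = ∑ i ∈ s, p1 i ⊗ₜ[k] (p2 i ⊗ₜ[k] p3 i)) :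
    ∑ i ∈ (ℛ k h).index, mulAntipodeForm χ (a ⊗ₜ (ℛ k h).left i) * V ((ℛ k h).right i)
      = ∑ i ∈ s, χ ((a * p1 i) ⊗ₜ[k] S k H (p2 i)) * V (p3 i) := by
  have hΔ₂ : Δ₂ k H h = ∑ i ∈ (ℛ k h).index, ∑ j ∈ (ℛ k ((ℛ k h).right i)).index,
      (ℛ k h).left i ⊗ₜ ((ℛ k ((ℛ k h).right i)).left j ⊗ₜ (ℛ k ((ℛ k h).right i)).right j) := by
    simp [Δ₂, Δ, ← (ℛ k h).eq, tmul_sum, ← (ℛ k ((ℛ k h).right _)).eq]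
  have := congrArg (mul' k k ∘ₗ map (χ ∘ₗ map (mulLeft k a) (S k H)) V ∘ₗ
      (TensorProduct.assoc k H H H).symm.toLinearMap)
    ((sum_tmul_tmul_eq (ℛ k h) (fun i => ℛ k ((ℛ k h).left i))
      fun i => ℛ k ((ℛ k h).right i)).trans (hΔ₂.symm.trans hp))
  simp only [map_sum, LinearMap.comp_apply, LinearEquiv.coe_coe, TensorProduct.assoc_symm_tmul,
    TensorProduct.map_tmul, mulLeft_apply, mul'_apply] at this
  simp only [mulAntipodeForm_tmul χ _ _ (ℛ k ((ℛ k h).left _)), Finset.sum_mul, this]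

lemma antipodeForm_mul_eq_one {χ : H ⊗[k] H →ₗ[k] k} {V : H →ₗ[k] k}
    (hV : ∀ (h : H) (ι : Type) (s : Finset ι) (h1 h2 : ι → H),
      Δ k H h = ∑ i ∈ s, h1 i ⊗ₜ[k] h2 i →
      ∑ i ∈ s, antipodeForm χ (h1 i) * V (h2 i) = ε k H h) :
    toConv (antipodeForm χ) * toConv V = 1 := by
  ext h
  rw [(ℛ k h).convMul_apply]
  exact hV h _ _ _ _ (ℛ k h).eq.symm

namespace IsFunCocycle

variable {χ χ' : H ⊗[k] H →ₗ[k] k}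

lemma inv_mul_eq_one (hχ : IsFunCocycle k H χ χ') : toConv χ' * toConv χ = 1 := by
  refine WithConv.ext (TensorProduct.ext' fun a h => ?_)
  rw [((ℛ k a).tmul (ℛ k h)).convMul_apply]
  simpa [Finset.sum_product, ε, mul_comm] using
    (hχ.1 a h _ _ _ _ _ _ _ _ (ℛ k a).eq.symm (ℛ k h).eq.symm).2

lemma mul_mulAntipodeForm (hχ : IsFunCocycle k H χ χ') :
    toConv χ * toConv (mulAntipodeForm χ)
      = toConv (antipodeForm χ ∘ₗ (counitTensorId k H : H ⊗[k] H →ₗ[k] H)) := by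
  refine WithConv.ext (TensorProduct.ext' fun a h => ?_)
  rw [((ℛ k a).tmul (ℛ k h)).convMul_apply]
  simp only [Repr.tmul_index, Repr.tmul_left, Repr.tmul_right, Finset.sum_product]
  rw [Finset.sum_congr rfl fun p _ => sum_mul_mulAntipodeForm_eq_sum_sum χ _ _ h (ℛ k h)
    fun i => ℛ k ((ℛ k h).left i), Finset.sum_comm]
  calc _ = ∑ i ∈ (ℛ k h).index, ∑ j ∈ (ℛ k ((ℛ k h).left i)).index,
      ∑ l ∈ (ℛ k (S k H ((ℛ k h).right i))).index,
        χ ((ℛ k ((ℛ k h).left i)).left j ⊗ₜ (ℛ k (S k H ((ℛ k h).right i))).left l) *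
          χ (a ⊗ₜ ((ℛ k ((ℛ k h).left i)).right j * (ℛ k (S k H ((ℛ k h).right i))).right l)) :=
        Finset.sum_congr rfl fun i _ => (hχ.2.1 _ _ _ _ _ _ _ _ _ _ _ _ _ _ _ (ℛ k a).eq.symm
          (ℛ k _).eq.symm (ℛ k _).eq.symm).symm
    _ = _ := by
      rw [sum_mul_comul_antipode_eq_mul_antipodeForm, (hχ.2.2 a).2]
      simp [ε]

end IsFunCocycle

end PaperTwist

theorem statement_10_general
    {k H : Type} [Field k] [Ring H] [HopfAlgebra k H]
    (χ χ' : H ⊗[k] H →ₗ[k] k) (hχ : IsFunCocycle k H χ χ')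
    (Vf : H →ₗ[k] k)
    (hVf : ∀ (h : H) (ι : Type) (s : Finset ι) (h1 h2 : ι → H),
      Δ k H h = ∑ i ∈ s, h1 i ⊗ₜ[k] h2 i →
      (∑ i ∈ s, (χ ∘ₗ (LinearMap.lTensor H (S k H)) ∘ₗ (Δ k H)) (h1 i) * Vf (h2 i)
          = ε k H h ∧
       ∑ i ∈ s, Vf (h1 i) * (χ ∘ₗ (LinearMap.lTensor H (S k H)) ∘ₗ (Δ k H)) (h2 i)
          = ε k H h)) :
    ∀ (a h : H) (ι : Type) (s : Finset ι) (p1 p2 p3 : ι → H),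
      Δ₂ k H h = ∑ i ∈ s, p1 i ⊗ₜ[k] (p2 i ⊗ₜ[k] p3 i) →
      ∑ i ∈ s, χ ((a * p1 i) ⊗ₜ[k] S k H (p2 i)) * Vf (p3 i) = χ' (a ⊗ₜ[k] h) := by
  intro a h ι s p1 p2 p3 hp
  have hUV := antipodeForm_mul_eq_one fun h ι s h1 h2 hrep => (hVf h ι s h1 h2 hrep).1
  have hχ' := left_inv_eq_right_inv hχ.inv_mul_eq_one (by
    rw [← mul_assoc, hχ.mul_mulAntipodeForm, toConv_comp_counitTensorId_mul_eq_one hUV])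
  rw [← sum_mulAntipodeForm_mul_eq χ Vf a h s p1 p2 p3 hp,
    ← convMul_comp_counitTensorId_tmul _ _ a h (ℛ k h), ← hχ']

/-- Let `χ : H ⊗ H → k` be a unital 2-cocycle with convolution inverse
`χ'`, let `U(h) = χ(h₁ ⊗ S h₂)` and let `Vf` be a convolution inverse of `U`. Then for all
`a, h ∈ H`: `χ(a·h₁ ⊗ S h₂)·Vf(h₃) = χ⁻¹(a ⊗ h)`. -/
theorem statement_10
    {k H : Type} [Field k] [Ring H] [HopfAlgebra k H]
    (hS : Function.Bijective (S k H))
    (χ χ' : H ⊗[k] H →ₗ[k] k) (hχ : IsFunCocycle k H χ χ')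
    (Vf : H →ₗ[k] k)
    (hVf : ∀ (h : H) (ι : Type) (s : Finset ι) (h1 h2 : ι → H),
      Δ k H h = ∑ i ∈ s, h1 i ⊗ₜ[k] h2 i →
      (∑ i ∈ s, (χ ∘ₗ (LinearMap.lTensor H (S k H)) ∘ₗ (Δ k H)) (h1 i) * Vf (h2 i)
          = ε k H h ∧
       ∑ i ∈ s, Vf (h1 i) * (χ ∘ₗ (LinearMap.lTensor H (S k H)) ∘ₗ (Δ k H)) (h2 i)
          = ε k H h)) :
    ∀ (a h : H) (ι : Type) (s : Finset ι) (p1 p2 p3 : ι → H),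
      Δ₂ k H h = ∑ i ∈ s, p1 i ⊗ₜ[k] (p2 i ⊗ₜ[k] p3 i) →
      ∑ i ∈ s, χ ((a * p1 i) ⊗ₜ[k] S k H (p2 i)) * Vf (p3 i) = χ' (a ⊗ₜ[k] h) :=
  statement_10_general χ χ' hχ Vf hVf
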